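/- arXiv:2605.30841 — 2 statements merged into one kernel-verified Lean document; each statement's English description precedes it below -/
import Mathlib

section
/- Let f : ℝⁿ → ℝ be continuously differentiable with L_g-Lipschitz gradient. Let x', x ∈ ℝⁿ, Δ', Δ > 0, and let ĉ' = (c₀, Δ' g', Δ'² vech(H')) ∈ ℝ^q with g' ∈ ℝⁿ and H' symmetric, such that ‖ĉ' − ĉ'^ℓ‖₂ ≤ κ_e Δ'² where ĉ'^ℓ := (f(x'), Δ' ∇f(x'), 0) and the constant blocks agree (c₀ = f(x')). Suppose ‖x − x'‖₂ ≤ C_s Δ and Δ' ≤ C_Δ Δ for constants C_s, C_Δ ≥ 0. Define the transported prior ĉ^π := (f(x), Δ (g' + H'(x − x')), Δ² vech(H')) and ĉ^ℓ := (f(x), Δ ∇f(x), 0). Then for every symmetric positive definite W with W ⪯ w_max I, ‖ĉ^π − ĉ^ℓ‖_W ≤ √w_max · (C_T κ_e + C_s L_g) · Δ², where C_T := C_Δ + √2 C_s + 1. -/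
open Matrix

/-- Index type for the entries of `vech` of a symmetric `n × n` matrix: pairs `i ≤ j`. -/
abbrev VIdx (n : ℕ) := {p : Fin n × Fin n // p.1 ≤ p.2}

/-- Index type for quadratic coefficient vectors (constant, gradient, Hessian blocks);
its cardinality is `q = (n+1)(n+2)/2`. -/
abbrev QIdx (n : ℕ) := Unit ⊕ Fin n ⊕ VIdx n

/-- Assemble a coefficient vector in `ℝ^q` from its constant, gradient and Hessian blocks. -/
noncomputable def blockVec {n : ℕ} (c0 : ℝ) (cg : Fin n → ℝ) (cH : VIdx n → ℝ) :
    QIdx n → ℝ :=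
  Sum.elim (fun _ => c0) (Sum.elim cg cH)

/-- The half-vectorization of a symmetric matrix. -/
noncomputable def vech {n : ℕ} (H : Matrix (Fin n) (Fin n) ℝ) : VIdx n → ℝ :=
  fun p => H p.val.1 p.val.2

/-- The `W`-weighted norm `‖v‖_W = √(vᵀ W v)`. -/
noncomputable def wNorm {ι : Type*} [Fintype ι] (W : Matrix ι ι ℝ) (v : ι → ℝ) : ℝ :=
  Real.sqrt (v ⬝ᵥ (W *ᵥ v))

/-- The Euclidean norm `‖v‖₂ = √(vᵀ v)` of a vector. -/
noncomputable def eNorm {ι : Type*} [Fintype ι] (v : ι → ℝ) : ℝ :=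
  Real.sqrt (v ⬝ᵥ v)

/-! The difference `ĉ^π - ĉ^ℓ` has zero constant block, Hessian block `Δ² vech H'` and gradient
block `Δ (d + H' (x - x') + e)` with `d = g' - ∇f(x')` and `e = ∇f(x') - ∇f(x)`. The prior's error
bound controls its two blocks separately: `‖d‖ ≤ κₑ Δ'` and `‖vech H'‖ ≤ κₑ`. Then
`‖H' (x - x')‖ ≤ √2 ‖vech H'‖ ‖x - x'‖` (Frobenius bound), `‖e‖ ≤ L_g ‖x - x'‖`, and
`Δ' ≤ C_Δ Δ`, `‖x - x'‖ ≤ C_s Δ` turn everything into multiples of `Δ²`. Finally `W ⪯ w_max I`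
gives `‖v‖_W ≤ √w_max ‖v‖₂`. -/

section eNorm

variable {ι : Type*} [Fintype ι]

lemma eNorm_eq_norm_toLp (v : ι → ℝ) : eNorm v = ‖WithLp.toLp 2 v‖ := by
  simp only [eNorm, EuclideanSpace.norm_eq, dotProduct, Real.norm_eq_abs, sq, abs_mul_abs_self]

lemma eNorm_ofLp (y : EuclideanSpace ℝ ι) : eNorm y.ofLp = ‖y‖ := by
  rw [eNorm_eq_norm_toLp, WithLp.toLp_ofLp]

lemma eNorm_nonneg (v : ι → ℝ) : 0 ≤ eNorm v := Real.sqrt_nonneg _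

lemma sq_eNorm (v : ι → ℝ) : eNorm v ^ 2 = v ⬝ᵥ v :=
  Real.sq_sqrt (Finset.sum_nonneg fun _ _ => mul_self_nonneg _)

lemma eNorm_add_le (u v : ι → ℝ) : eNorm (u + v) ≤ eNorm u + eNorm v := by
  simpa only [eNorm_eq_norm_toLp, WithLp.toLp_add] using norm_add_le _ _

lemma eNorm_smul (c : ℝ) (v : ι → ℝ) : eNorm (c • v) = |c| * eNorm v := by
  rw [eNorm_eq_norm_toLp, WithLp.toLp_smul, norm_smul, Real.norm_eq_abs, eNorm_eq_norm_toLp]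

lemma eNorm_le_of_dotProduct_le {v : ι → ℝ} {a : ℝ} (ha : 0 ≤ a) (h : v ⬝ᵥ v ≤ a ^ 2) :
    eNorm v ≤ a :=
  Real.sqrt_le_iff.mpr ⟨ha, h⟩

lemma wNorm_le_sqrt_mul_eNorm [DecidableEq ι] {W : Matrix ι ι ℝ} {wmax : ℝ}
    (hW : (wmax • (1 : Matrix ι ι ℝ) - W).PosSemidef) (v : ι → ℝ) :
    wNorm W v ≤ Real.sqrt wmax * eNorm v := by
  have h := hW.dotProduct_mulVec_nonneg v
  rw [star_trivial, sub_mulVec, smul_mulVec, one_mulVec, dotProduct_sub, dotProduct_smul,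
    smul_eq_mul, sub_nonneg] at h
  calc wNorm W v ≤ Real.sqrt (wmax * (v ⬝ᵥ v)) := Real.sqrt_le_sqrt h
    _ = Real.sqrt wmax * eNorm v := Real.sqrt_mul' _ (sq_eNorm v ▸ sq_nonneg _)

end eNorm

lemma dotProduct_mulVec_self_le {m k : Type*} [Fintype m] [Fintype k]
    (A : Matrix m k ℝ) (v : k → ℝ) :
    (A *ᵥ v) ⬝ᵥ (A *ᵥ v) ≤ (∑ i, ∑ j, A i j ^ 2) * (v ⬝ᵥ v) := by
  rw [Finset.sum_mul]
  refine Finset.sum_le_sum fun i _ => ?_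
  simpa only [mulVec, dotProduct, ← sq] using Finset.sum_mul_sq_le_sq_mul_sq _ (A i) v

lemma sum_sq_le_two_mul_sum_sq_vech {n : ℕ} {H : Matrix (Fin n) (Fin n) ℝ} (hH : H.IsSymm) :
    ∑ i, ∑ j, H i j ^ 2 ≤ 2 * ∑ p, vech H p ^ 2 := by
  set upper : Fin n × Fin n → ℝ := fun p => if p.1 ≤ p.2 then H p.1 p.2 ^ 2 else 0
  have h_vech : ∑ p, vech H p ^ 2 = ∑ p, upper p := by
    rw [← Finset.sum_filter]
    exact (Finset.sum_subtype _ (by simp) fun p : Fin n × Fin n => H p.1 p.2 ^ 2).symm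
  have h_pointwise (p : Fin n × Fin n) : H p.1 p.2 ^ 2 ≤ upper p + upper p.swap := by
    have h_symm : H p.2 p.1 = H p.1 p.2 := hH.apply p.1 p.2
    simp only [upper, Prod.fst_swap, Prod.snd_swap, h_symm]
    rcases le_total p.1 p.2 with h | h <;> simp only [h, if_true] <;> split_ifs <;>
      linarith [sq_nonneg (H p.1 p.2)]
  calc ∑ i, ∑ j, H i j ^ 2 = ∑ p : Fin n × Fin n, H p.1 p.2 ^ 2 :=
        (Fintype.sum_prod_type fun p => H p.1 p.2 ^ 2).symm
    _ ≤ ∑ p, (upper p + upper p.swap) := Finset.sum_le_sum fun p _ => h_pointwise p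
    _ = 2 * ∑ p, vech H p ^ 2 := by
      rw [Finset.sum_add_distrib, h_vech, two_mul,
        Fintype.sum_equiv (Equiv.prodComm _ _) (fun p => upper p.swap) upper fun _ => rfl]

lemma eNorm_mulVec_le {n : ℕ} {H : Matrix (Fin n) (Fin n) ℝ} (hH : H.IsSymm) (v : Fin n → ℝ) :
    eNorm (H *ᵥ v) ≤ Real.sqrt 2 * eNorm (vech H) * eNorm v := by
  refine eNorm_le_of_dotProduct_le (by positivity [eNorm_nonneg (vech H), eNorm_nonneg v]) ?_
  have h_vech : ∑ p, vech H p ^ 2 = eNorm (vech H) ^ 2 := by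
    rw [sq_eNorm]
    simp only [dotProduct, sq]
  calc (H *ᵥ v) ⬝ᵥ (H *ᵥ v) ≤ (∑ i, ∑ j, H i j ^ 2) * (v ⬝ᵥ v) := dotProduct_mulVec_self_le H v
    _ ≤ (2 * ∑ p, vech H p ^ 2) * (v ⬝ᵥ v) :=
      mul_le_mul_of_nonneg_right (sum_sq_le_two_mul_sum_sq_vech hH) (sq_eNorm v ▸ sq_nonneg _)
    _ = (Real.sqrt 2 * eNorm (vech H) * eNorm v) ^ 2 := by
      rw [h_vech, ← sq_eNorm v, mul_pow, mul_pow, Real.sq_sqrt zero_le_two]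

section blockVec

variable {n : ℕ}

lemma blockVec_sub (a a' : ℝ) (b b' : Fin n → ℝ) (c c' : VIdx n → ℝ) :
    blockVec a b c - blockVec a' b' c' = blockVec (a - a') (b - b') (c - c') := by
  ext (_ | i | p) <;> rfl

lemma sq_eNorm_blockVec (a : ℝ) (b : Fin n → ℝ) (c : VIdx n → ℝ) :
    eNorm (blockVec a b c) ^ 2 = a ^ 2 + eNorm b ^ 2 + eNorm c ^ 2 := by
  rw [sq_eNorm, sq_eNorm, sq_eNorm]
  simp only [blockVec, dotProduct, Fintype.sum_sum_type, Sum.elim_inl, Sum.elim_inr,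
    Finset.univ_unique, Finset.sum_singleton, sq, add_assoc]

lemma eNorm_blockVec_zero_le (b : Fin n → ℝ) (c : VIdx n → ℝ) :
    eNorm (blockVec 0 b c) ≤ eNorm b + eNorm c := by
  refine (sq_le_sq₀ (eNorm_nonneg _) (by positivity [eNorm_nonneg b, eNorm_nonneg c])).mp ?_
  rw [sq_eNorm_blockVec]
  nlinarith [mul_nonneg (eNorm_nonneg b) (eNorm_nonneg c)]

lemma eNorm_le_eNorm_blockVec_left (a : ℝ) (b : Fin n → ℝ) (c : VIdx n → ℝ) :
    eNorm b ≤ eNorm (blockVec a b c) :=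
  (sq_le_sq₀ (eNorm_nonneg _) (eNorm_nonneg _)).mp <| by
    rw [sq_eNorm_blockVec]; nlinarith [sq_nonneg a, sq_nonneg (eNorm c)]

lemma eNorm_le_eNorm_blockVec_right (a : ℝ) (b : Fin n → ℝ) (c : VIdx n → ℝ) :
    eNorm c ≤ eNorm (blockVec a b c) :=
  (sq_le_sq₀ (eNorm_nonneg _) (eNorm_nonneg _)).mp <| by
    rw [sq_eNorm_blockVec]; nlinarith [sq_nonneg a, sq_nonneg (eNorm b)]

end blockVec

section transport

variable {n : ℕ}

lemma eNorm_le_of_eNorm_blockVec_smul_le {r κ : ℝ} (hr : 0 < r) {b : Fin n → ℝ}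
    {c : VIdx n → ℝ} (h : eNorm (blockVec 0 (r • b) (r ^ 2 • c)) ≤ κ * r ^ 2) :
    eNorm b ≤ κ * r ∧ eNorm c ≤ κ := by
  have hb := (eNorm_le_eNorm_blockVec_left _ _ _).trans h
  have hc := (eNorm_le_eNorm_blockVec_right _ _ _).trans h
  rw [eNorm_smul, abs_of_pos hr] at hb
  rw [eNorm_smul, abs_of_pos (by positivity)] at hc
  constructor
  · nlinarith
  · nlinarith [pow_pos hr 2]

lemma eNorm_blockVec_transport_le {H : Matrix (Fin n) (Fin n) ℝ} (hH : H.IsSymm)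
    {d w e : Fin n → ℝ} {Δ Δ' κ Cs CΔ Lg : ℝ} (hΔ : 0 ≤ Δ)
    (hd : eNorm d ≤ κ * Δ') (hvech : eNorm (vech H) ≤ κ) (hw : eNorm w ≤ Cs * Δ)
    (he : eNorm e ≤ Lg * (Cs * Δ)) (hΔΔ : Δ' ≤ CΔ * Δ) :
    eNorm (blockVec 0 (Δ • (d + H *ᵥ w + e)) (Δ ^ 2 • vech H))
      ≤ ((CΔ + Real.sqrt 2 * Cs + 1) * κ + Cs * Lg) * Δ ^ 2 := by
  have hκ : 0 ≤ κ := (eNorm_nonneg _).trans hvech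
  have hHw : eNorm (H *ᵥ w) ≤ Real.sqrt 2 * κ * (Cs * Δ) :=
    (eNorm_mulVec_le hH w).trans <| by gcongr; exact eNorm_nonneg w
  have hgrad :
      eNorm (d + H *ᵥ w + e) ≤ κ * (CΔ * Δ) + Real.sqrt 2 * κ * (Cs * Δ) + Lg * (Cs * Δ) :=
    calc eNorm (d + H *ᵥ w + e) ≤ eNorm d + eNorm (H *ᵥ w) + eNorm e :=
          (eNorm_add_le _ _).trans (by gcongr; exact eNorm_add_le _ _)
      _ ≤ _ := by gcongr; exact hd.trans (by gcongr)
  calc _ ≤ eNorm (Δ • (d + H *ᵥ w + e)) + eNorm (Δ ^ 2 • vech H) := eNorm_blockVec_zero_le _ _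
    _ = Δ * eNorm (d + H *ᵥ w + e) + Δ ^ 2 * eNorm (vech H) := by
      rw [eNorm_smul, eNorm_smul, abs_of_nonneg hΔ, abs_of_nonneg (by positivity)]
    _ ≤ Δ * (κ * (CΔ * Δ) + Real.sqrt 2 * κ * (Cs * Δ) + Lg * (Cs * Δ)) + Δ ^ 2 * κ := by
      gcongr
    _ = _ := by ring

end transport

theorem stmt8_general (n : ℕ)
    (f : EuclideanSpace ℝ (Fin n) → ℝ)
    (Lg : ℝ) (hLg : 0 < Lg)
    (hlip : ∀ a c : EuclideanSpace ℝ (Fin n),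
      ‖gradient f a - gradient f c‖ ≤ Lg * ‖a - c‖)
    (x' x : EuclideanSpace ℝ (Fin n)) (Δ' Δ : ℝ) (hΔ' : 0 < Δ') (hΔ : 0 < Δ)
    (c0 : ℝ) (g' : Fin n → ℝ) (H' : Matrix (Fin n) (Fin n) ℝ) (hH' : H'.IsSymm)
    (chat' chatl' : QIdx n → ℝ)
    (hchat' : chat' = blockVec c0 (fun i => Δ' * g' i) (fun p => Δ' ^ 2 * vech H' p))
    (hchatl' : chatl' = blockVec (f x') (fun i => Δ' * gradient f x' i) 0)
    (hc0 : c0 = f x')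
    (κe : ℝ) (herr : eNorm (chat' - chatl') ≤ κe * Δ' ^ 2)
    (Cs CΔ : ℝ)
    (hxx : ‖x - x'‖ ≤ Cs * Δ) (hΔΔ : Δ' ≤ CΔ * Δ)
    (cpi cl : QIdx n → ℝ)
    (hcpi : cpi = blockVec (f x)
      (fun i => Δ * (g' i + (H' *ᵥ fun j => (x - x') j) i))
      (fun p => Δ ^ 2 * vech H' p))
    (hcl : cl = blockVec (f x) (fun i => Δ * gradient f x i) 0)
    (CT : ℝ) (hCT : CT = CΔ + Real.sqrt 2 * Cs + 1)
    (wmax : ℝ) :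
    ∀ W : Matrix (QIdx n) (QIdx n) ℝ, W.PosDef →
      (wmax • (1 : Matrix (QIdx n) (QIdx n) ℝ) - W).PosSemidef →
      wNorm W (cpi - cl) ≤ Real.sqrt wmax * (CT * κe + Cs * Lg) * Δ ^ 2 := by
  intro W _ hW
  set d := g' - (gradient f x').ofLp
  have h_prior : chat' - chatl' = blockVec 0 (Δ' • d) (Δ' ^ 2 • vech H') := by
    rw [hchat', hchatl', hc0, blockVec_sub, sub_self]
    congr 1 <;> ext <;> simp [d, mul_sub]
  have h_transport : cpi - cl = blockVec 0 (Δ • (d + (H' *ᵥ fun j => (x - x') j) +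
      (gradient f x' - gradient f x).ofLp)) (Δ ^ 2 • vech H') := by
    rw [hcpi, hcl, blockVec_sub, sub_self]
    congr 1 <;> ext i
    · simp only [Pi.sub_apply, Pi.add_apply, Pi.smul_apply, smul_eq_mul, d, WithLp.ofLp_sub]
      ring
    · simp
  obtain ⟨hd, hvech⟩ := eNorm_le_of_eNorm_blockVec_smul_le hΔ' (h_prior ▸ herr)
  have he : eNorm (gradient f x' - gradient f x).ofLp ≤ Lg * (Cs * Δ) := by
    rw [eNorm_ofLp]
    exact (hlip x' x).trans (by rw [norm_sub_rev]; gcongr)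
  calc wNorm W (cpi - cl) ≤ Real.sqrt wmax * eNorm (cpi - cl) := wNorm_le_sqrt_mul_eNorm hW _
    _ ≤ Real.sqrt wmax * ((CT * κe + Cs * Lg) * Δ ^ 2) := by
      gcongr
      rw [h_transport, hCT]
      exact eNorm_blockVec_transport_le hH' hΔ.le hd hvech
        ((eNorm_ofLp _).trans_le hxx) he hΔΔ
    _ = Real.sqrt wmax * (CT * κe + Cs * Lg) * Δ ^ 2 := (mul_assoc _ _ _).symm

theorem stmt8 (n : ℕ)
    (f : EuclideanSpace ℝ (Fin n) → ℝ) (hf : ContDiff ℝ 1 f)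
    (Lg : ℝ) (hLg : 0 < Lg)
    (hlip : ∀ a c : EuclideanSpace ℝ (Fin n),
      ‖gradient f a - gradient f c‖ ≤ Lg * ‖a - c‖)
    (x' x : EuclideanSpace ℝ (Fin n)) (Δ' Δ : ℝ) (hΔ' : 0 < Δ') (hΔ : 0 < Δ)
    (c0 : ℝ) (g' : Fin n → ℝ) (H' : Matrix (Fin n) (Fin n) ℝ) (hH' : H'.IsSymm)
    (chat' chatl' : QIdx n → ℝ)
    (hchat' : chat' = blockVec c0 (fun i => Δ' * g' i) (fun p => Δ' ^ 2 * vech H' p))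
    (hchatl' : chatl' = blockVec (f x') (fun i => Δ' * gradient f x' i) 0)
    (hc0 : c0 = f x')
    (κe : ℝ) (herr : eNorm (chat' - chatl') ≤ κe * Δ' ^ 2)
    (Cs CΔ : ℝ) (hCs : 0 ≤ Cs) (hCΔ : 0 ≤ CΔ)
    (hxx : ‖x - x'‖ ≤ Cs * Δ) (hΔΔ : Δ' ≤ CΔ * Δ)
    (cpi cl : QIdx n → ℝ)
    (hcpi : cpi = blockVec (f x)
      (fun i => Δ * (g' i + (H' *ᵥ fun j => (x - x') j) i))
      (fun p => Δ ^ 2 * vech H' p))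
    (hcl : cl = blockVec (f x) (fun i => Δ * gradient f x i) 0)
    (CT : ℝ) (hCT : CT = CΔ + Real.sqrt 2 * Cs + 1)
    (wmax : ℝ) :
    ∀ W : Matrix (QIdx n) (QIdx n) ℝ, W.PosDef →
      (wmax • (1 : Matrix (QIdx n) (QIdx n) ℝ) - W).PosSemidef →
      wNorm W (cpi - cl) ≤ Real.sqrt wmax * (CT * κe + Cs * Lg) * Δ ^ 2 :=
  stmt8_general n f Lg hLg hlip x' x Δ' Δ hΔ' hΔ c0 g' H' hH' chat' chatl' hchat' hchatl' hc0 κe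
    herr Cs CΔ hxx hΔΔ cpi cl hcpi hcl CT hCT wmax
end

section
/- Let n ≥ 1 and q = (n+1)(n+2)/2. Let Â ∈ ℝ^{(2n+1)×q} be the matrix whose 2n+1 rows are φ̂(u)ᵀ for u ranging over the fallback points {0, e₁, …, eₙ, −e₁, …, −eₙ} ⊂ ℝⁿ. Then for every symmetric positive definite W ∈ ℝ^{q×q} with W ⪯ w_max I (w_max > 0), the matrix M := Â W⁻¹ Âᵀ satisfies λ_min(M) ≥ 1/(w_max (4n+3)). -/
open Matrix

/-- Index set `{0, +1, …, +n, −1, …, −n}` for the fallback points. -/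
abbrev Idx (n : ℕ) := Unit ⊕ Fin n ⊕ Fin n

/-- The scaled quadratic feature vector `φ̂(u) = (1, u, qvec u)`, where `qvec u` has the
entries `uᵢ²/2` on the diagonal positions and `uᵢ uⱼ` (`i < j`) on the off-diagonal
positions, consistently with the half-vectorization `vech`. -/
noncomputable def phiHat {n : ℕ} (u : Fin n → ℝ) : QIdx n → ℝ
  | Sum.inl _ => 1
  | Sum.inr (Sum.inl i) => u i
  | Sum.inr (Sum.inr p) =>
      if p.val.1 = p.val.2 then u p.val.1 ^ 2 / 2 else u p.val.1 * u p.val.2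

/-- The fallback points `0, e₁, …, eₙ, −e₁, …, −eₙ`. -/
noncomputable def fallbackPoint (n : ℕ) : Idx n → Fin n → ℝ
  | Sum.inl _ => 0
  | Sum.inr (Sum.inl i) => fun j => if j = i then 1 else 0
  | Sum.inr (Sum.inr i) => fun j => if j = i then -1 else 0

/-- The fallback design matrix, whose rows are `φ̂(u)ᵀ` for the fallback points `u`. -/
noncomputable def fallbackA (n : ℕ) : Matrix (Idx n) (QIdx n) ℝ :=
  Matrix.of fun a => phiHat (fallbackPoint n a)

/-- The smallest eigenvalue of a (Hermitian) real matrix. -/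
noncomputable def lambdaMin {ι : Type*} [Fintype ι] [DecidableEq ι] [Nonempty ι]
    (M : Matrix ι ι ℝ) : ℝ :=
  if h : M.IsHermitian then ⨅ i, h.eigenvalues i else 0

/-!
Write `y = Âᵀ x`. The rows of `Â` are so simple that `x` can be read back off three kinds of
coordinates of `y`: with `a = x(+eᵢ)`, `b = x(−eᵢ)` one has `y_{eᵢ} = a − b`,
`y_{(i,i)} = (a + b)/2` and `y₀ = x₀ + ∑ᵢ (a + b)`, so `x₀ = y₀ − 2 ∑ᵢ y_{(i,i)}` and
`a² + b² = 2 y_{(i,i)}² + y_{eᵢ}²/2`. Cauchy–Schwarz on the first relation then gives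
`‖x‖² ≤ (4n+3) ‖Âᵀ x‖²`. On the other hand `W ⪯ w_max I` gives `‖y‖² ≤ w_max yᵀ W⁻¹ y`, so
`xᵀ M x = yᵀ W⁻¹ y ≥ ‖x‖² / (w_max (4n+3))`, and the Rayleigh quotient bounds every eigenvalue.
-/

lemma Matrix.IsHermitian.le_eigenvalues_of_forall {ι : Type*} [Fintype ι] [DecidableEq ι]
    {M : Matrix ι ι ℝ} (hM : M.IsHermitian) {c : ℝ}
    (h : ∀ x : ι → ℝ, c * (x ⬝ᵥ x) ≤ x ⬝ᵥ (M *ᵥ x)) (i : ι) :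
    c ≤ hM.eigenvalues i := by
  have hunit : ⇑(hM.eigenvectorBasis i) ⬝ᵥ ⇑(hM.eigenvectorBasis i) = 1 := by
    have h1 := orthonormal_iff_ite.mp hM.eigenvectorBasis.orthonormal i i
    rwa [if_pos rfl, EuclideanSpace.inner_eq_star_dotProduct, star_trivial] at h1
  simpa [hM.eigenvalues_eq, hunit] using h (hM.eigenvectorBasis i)

lemma le_lambdaMin_of_forall {ι : Type*} [Fintype ι] [DecidableEq ι] [Nonempty ι]
    {M : Matrix ι ι ℝ} (hM : M.IsHermitian) {c : ℝ}
    (h : ∀ x : ι → ℝ, c * (x ⬝ᵥ x) ≤ x ⬝ᵥ (M *ᵥ x)) : c ≤ lambdaMin M := by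
  rw [lambdaMin, dif_pos hM]
  exact le_ciInf (hM.le_eigenvalues_of_forall h)

section QuadraticForms

variable {α l m : Type*} [CommSemiring α] [Fintype l] [Fintype m]

lemma Matrix.mulVec_dotProduct_mulVec_self (B : Matrix l m α) (v : m → α) :
    (B *ᵥ v) ⬝ᵥ (B *ᵥ v) = v ⬝ᵥ ((Bᵀ * B) *ᵥ v) := by
  rw [← mulVec_mulVec, dotProduct_mulVec v Bᵀ, vecMul_transpose]

lemma Matrix.dotProduct_mul_mul_transpose_mulVec (A : Matrix l m α) (B : Matrix m m α)
    (x : l → α) :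
    x ⬝ᵥ ((A * B * Aᵀ) *ᵥ x) = (Aᵀ *ᵥ x) ⬝ᵥ (B *ᵥ (Aᵀ *ᵥ x)) := by
  rw [← mulVec_mulVec, ← mulVec_mulVec, dotProduct_mulVec x A, ← mulVec_transpose]

end QuadraticForms

open scoped MatrixOrder in
lemma Matrix.PosDef.dotProduct_self_le_mul_dotProduct_inv_mulVec {m : Type*} [Fintype m]
    [DecidableEq m] {W : Matrix m m ℝ} {c : ℝ} (hW : W.PosDef)
    (hWc : (c • 1 - W).PosSemidef) (y : m → ℝ) :
    y ⬝ᵥ y ≤ c * (y ⬝ᵥ (W⁻¹ *ᵥ y)) := by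
  set R := CFC.sqrt W
  have hRT : Rᵀ = R := by
    rw [← conjTranspose_eq_transpose_of_trivial]
    exact (CFC.sqrt_nonneg W).posSemidef.1
  have hRR : R * R = W := CFC.sqrt_mul_sqrt_self W hW.posSemidef.nonneg
  have hWWinv : W * W⁻¹ = 1 := mul_nonsing_inv W (isUnit_iff_ne_zero.mpr hW.det_pos.ne')
  -- With `u = √W W⁻¹ y`, `‖y‖² = uᵀ W u` and `yᵀ W⁻¹ y = ‖u‖²`.
  set u := R *ᵥ (W⁻¹ *ᵥ y)
  have hy : y = R *ᵥ u := by
    rw [mulVec_mulVec, mulVec_mulVec, hRR, hWWinv, one_mulVec]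
  calc y ⬝ᵥ y = u ⬝ᵥ (W *ᵥ u) := by
        conv_lhs => rw [hy]
        rw [mulVec_dotProduct_mulVec_self, hRT, hRR]
    _ ≤ c * (u ⬝ᵥ u) := by
        have hu := hWc.dotProduct_mulVec_nonneg u
        rw [sub_mulVec, smul_mulVec, one_mulVec, dotProduct_sub, dotProduct_smul, smul_eq_mul,
          star_trivial] at hu
        linarith
    _ = c * (y ⬝ᵥ (W⁻¹ *ᵥ y)) := by
        rw [mulVec_dotProduct_mulVec_self, hRT, hRR, mulVec_mulVec, hWWinv, one_mulVec,
          dotProduct_comm]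

lemma sq_add_mul_sum_le {ι : Type*} [Fintype ι] (u k : ℝ) (s : ι → ℝ) :
    (u + k * ∑ i, s i) ^ 2 ≤ (1 + Fintype.card ι * k ^ 2) * (u ^ 2 + ∑ i, s i ^ 2) := by
  -- Cauchy–Schwarz for `(1, k, …, k)` and `(u, s)`, indexed by `Option ι`.
  simpa [Fintype.sum_option, Finset.mul_sum] using
    Finset.sum_mul_sq_le_sq_mul_sq Finset.univ (fun o : Option ι => o.elim 1 fun _ => k)
      (fun o => o.elim u s)

def VIdx.diag (n : ℕ) : Fin n ↪ VIdx n :=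
  ⟨fun i => ⟨(i, i), le_rfl⟩, fun _ _ h => congrArg (fun p : VIdx n => p.val.1) h⟩

lemma VIdx.diag_apply (n : ℕ) (i : Fin n) : VIdx.diag n i = ⟨(i, i), le_rfl⟩ := rfl

lemma sq_add_sum_sq_add_sum_sq_le_dotProduct_self {n : ℕ} (y : QIdx n → ℝ) :
    y (Sum.inl ()) ^ 2 + ∑ i, y (Sum.inr (Sum.inl i)) ^ 2
      + ∑ i, y (Sum.inr (Sum.inr (VIdx.diag n i))) ^ 2 ≤ y ⬝ᵥ y := by
  have hdiag : ∑ i, y (Sum.inr (Sum.inr (VIdx.diag n i))) ^ 2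
      ≤ ∑ p, y (Sum.inr (Sum.inr p)) ^ 2 := by
    rw [← Finset.sum_map Finset.univ (VIdx.diag n) (fun p => y (Sum.inr (Sum.inr p)) ^ 2)]
    exact Finset.sum_le_univ_sum_of_nonneg fun _ => sq_nonneg _
  simp only [dotProduct, Fintype.sum_sum_type, Fintype.univ_unit, Finset.sum_singleton, ← sq]
  linarith

section Fallback

variable {n : ℕ} (x : Idx n → ℝ)

lemma fallbackA_transpose_mulVec_inl :
    ((fallbackA n)ᵀ *ᵥ x) (Sum.inl ()) =
      x (Sum.inl ()) + ∑ i, (x (Sum.inr (Sum.inl i)) + x (Sum.inr (Sum.inr i))) := by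
  simp [mulVec, dotProduct, fallbackA, phiHat, Fintype.sum_sum_type, Finset.sum_add_distrib]

lemma fallbackA_transpose_mulVec_linear (i : Fin n) :
    ((fallbackA n)ᵀ *ᵥ x) (Sum.inr (Sum.inl i)) =
      x (Sum.inr (Sum.inl i)) - x (Sum.inr (Sum.inr i)) := by
  simp [mulVec, dotProduct, fallbackA, phiHat, fallbackPoint, Fintype.sum_sum_type, sub_eq_add_neg]

lemma fallbackA_transpose_mulVec_diag (i : Fin n) :
    ((fallbackA n)ᵀ *ᵥ x) (Sum.inr (Sum.inr (VIdx.diag n i))) =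
      (x (Sum.inr (Sum.inl i)) + x (Sum.inr (Sum.inr i))) / 2 := by
  simp [VIdx.diag_apply, mulVec, dotProduct, fallbackA, phiHat, fallbackPoint,
    Fintype.sum_sum_type, ite_div, ite_mul]
  ring

lemma dotProduct_self_le_fallbackA_transpose_mulVec :
    x ⬝ᵥ x ≤ (4 * n + 3) * (((fallbackA n)ᵀ *ᵥ x) ⬝ᵥ ((fallbackA n)ᵀ *ᵥ x)) := by
  have hy₀ := fallbackA_transpose_mulVec_inl x
  have hd := fallbackA_transpose_mulVec_linear x
  have hs := fallbackA_transpose_mulVec_diag x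
  generalize (fallbackA n)ᵀ *ᵥ x = y at hy₀ hd hs ⊢
  set s : Fin n → ℝ := fun i => y (Sum.inr (Sum.inr (VIdx.diag n i)))
  set d : Fin n → ℝ := fun i => y (Sum.inr (Sum.inl i))
  have hx : x ⬝ᵥ x =
      (y (Sum.inl ()) + (-2) * ∑ i, s i) ^ 2 + ∑ i, (2 * s i ^ 2 + d i ^ 2 / 2) := by
    have ht : x (Sum.inl ()) = y (Sum.inl ()) + (-2) * ∑ i, s i := by
      rw [hy₀, Finset.mul_sum, add_assoc, ← Finset.sum_add_distrib,
        Finset.sum_eq_zero fun i _ => by simp only [s, hs]; ring, add_zero]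
    have hab : ∀ i, x (Sum.inr (Sum.inl i)) ^ 2 + x (Sum.inr (Sum.inr i)) ^ 2
        = 2 * s i ^ 2 + d i ^ 2 / 2 := fun i => by
      simp only [s, d, hs, hd]
      ring
    simp only [dotProduct, Fintype.sum_sum_type, Fintype.univ_unit, Finset.sum_singleton, ← sq,
      ← ht, ← hab, Finset.sum_add_distrib]
  have hD : 0 ≤ ∑ i, d i ^ 2 := Finset.sum_nonneg fun _ _ => sq_nonneg _
  calc x ⬝ᵥ x = _ := hx
    _ ≤ (1 + n * (-2) ^ 2) * (y (Sum.inl ()) ^ 2 + ∑ i, s i ^ 2)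
          + ∑ i, (2 * s i ^ 2 + d i ^ 2 / 2) := by
        gcongr
        simpa using sq_add_mul_sum_le (y (Sum.inl ())) (-2) s
    _ ≤ (4 * n + 3) * (y (Sum.inl ()) ^ 2 + ∑ i, d i ^ 2 + ∑ i, s i ^ 2) := by
        rw [Finset.sum_add_distrib, ← Finset.mul_sum, ← Finset.sum_div]
        nlinarith [sq_nonneg (y (Sum.inl ())), mul_nonneg (Nat.cast_nonneg n : (0 : ℝ) ≤ n) hD]
    _ ≤ (4 * n + 3) * (y ⬝ᵥ y) := by
        gcongr
        exact sq_add_sum_sq_add_sum_sq_le_dotProduct_self y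

end Fallback

theorem stmt13_general (n : ℕ) (wmax : ℝ) (hwmax : 0 < wmax)
    (W : Matrix (QIdx n) (QIdx n) ℝ) (hW : W.PosDef)
    (hup : (wmax • (1 : Matrix (QIdx n) (QIdx n) ℝ) - W).PosSemidef) :
    1 / (wmax * (4 * n + 3)) ≤ lambdaMin (fallbackA n * W⁻¹ * (fallbackA n)ᵀ) := by
  have hM : (fallbackA n * W⁻¹ * (fallbackA n)ᵀ).IsHermitian := by
    simpa using isHermitian_mul_mul_conjTranspose (fallbackA n) hW.inv.1
  refine le_lambdaMin_of_forall hM fun x => ?_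
  set y := (fallbackA n)ᵀ *ᵥ x
  rw [dotProduct_mul_mul_transpose_mulVec, one_div_mul_eq_div, div_le_iff₀ (by positivity)]
  calc x ⬝ᵥ x ≤ (4 * n + 3) * (y ⬝ᵥ y) := dotProduct_self_le_fallbackA_transpose_mulVec x
    _ ≤ (4 * n + 3) * (wmax * (y ⬝ᵥ (W⁻¹ *ᵥ y))) := by
        gcongr
        exact hW.dotProduct_self_le_mul_dotProduct_inv_mulVec hup y
    _ = y ⬝ᵥ (W⁻¹ *ᵥ y) * (wmax * (4 * n + 3)) := by ring

theorem stmt13 (n : ℕ) (hn : 1 ≤ n) (wmax : ℝ) (hwmax : 0 < wmax)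
    (W : Matrix (QIdx n) (QIdx n) ℝ) (hW : W.PosDef)
    (hup : (wmax • (1 : Matrix (QIdx n) (QIdx n) ℝ) - W).PosSemidef) :
    1 / (wmax * (4 * n + 3)) ≤ lambdaMin (fallbackA n * W⁻¹ * (fallbackA n)ᵀ) :=
  stmt13_general n wmax hwmax W hW hup
end
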